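/- arXiv:2110.00875 — 4 statements merged into one kernel-verified Lean document; each statement's English description precedes it below -/
import Mathlib

section
/- Let Φ : ℝ → ℝ be twice differentiable, positive, and satisfy (g·z² + 1)·Φ''(z) = g·(Φ(z) − z·Φ'(z)) for all z, where g > 0 is a constant, with Φ(z) − zΦ'(z) > 0 and Φ''(z) > 0. Then there exist a constant f > 0 and a constant b such that Φ(z) = f·√(g·z² + 1) + b·z for all z. -/
theorem stmt8 (Φ : ℝ → ℝ) (hΦd : Differentiable ℝ Φ)
    (hΦ'd : Differentiable ℝ (deriv Φ)) (hΦpos : ∀ z : ℝ, 0 < Φ z)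
    (g : ℝ) (hg : 0 < g)
    (hode : ∀ z : ℝ, (g * z ^ 2 + 1) * deriv (deriv Φ) z
      = g * (Φ z - z * deriv Φ z))
    (h1 : ∀ z : ℝ, 0 < Φ z - z * deriv Φ z)
    (h2 : ∀ z : ℝ, 0 < deriv (deriv Φ) z) :
    ∃ f : ℝ, 0 < f ∧ ∃ b : ℝ, ∀ z : ℝ,
      Φ z = f * Real.sqrt (g * z ^ 2 + 1) + b * z := by
  have hq : ∀ z : ℝ, (0:ℝ) < g * z ^ 2 + 1 := by intro z; positivity
  set s : ℝ → ℝ := fun z => Real.sqrt (g * z ^ 2 + 1) with hs_def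
  have hs_pos : ∀ z, 0 < s z := fun z => Real.sqrt_pos.2 (hq z)
  have hs_ne : ∀ z, s z ≠ 0 := fun z => (hs_pos z).ne'
  have hs_sq : ∀ z, s z ^ 2 = g * z ^ 2 + 1 := fun z => Real.sq_sqrt (hq z).le
  have hs_deriv : ∀ z, HasDerivAt s (g * z / s z) z := by
    intro z
    have h1' : HasDerivAt (fun z : ℝ => g * z ^ 2 + 1) (g * (2 * z)) z := by
      simpa using ((hasDerivAt_pow 2 z).const_mul g).add_const 1
    have := h1'.sqrt (ne_of_gt (hq z))
    convert this using 1
    rw [hs_def]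
    field_simp
  have hs'_deriv : ∀ z, HasDerivAt (fun z => g * z / s z) (g / s z ^ 3) z := by
    intro z
    have hc : HasDerivAt (fun z : ℝ => g * z) g z := by
      simpa using (hasDerivAt_id z).const_mul g
    have := hc.div (hs_deriv z) (hs_ne z)
    refine this.congr_deriv (Eq.symm ?_)
    have h2' := hs_sq z
    field_simp [hs_ne z]
    linear_combination (-1 : ℝ) * h2'
  -- conserved quantity
  have hΦ' : ∀ z, HasDerivAt Φ (deriv Φ z) z := fun z => (hΦd z).hasDerivAt
  have hΦ'' : ∀ z, HasDerivAt (deriv Φ) (deriv (deriv Φ) z) z :=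
    fun z => (hΦ'd z).hasDerivAt
  have hu : ∀ z, HasDerivAt (fun z => Φ z - z * deriv Φ z)
      (-(z * deriv (deriv Φ) z)) z := by
    intro z
    have := (hΦ' z).sub ((hasDerivAt_id z).mul (hΦ'' z))
    refine this.congr_deriv (Eq.symm ?_)
    simp only [id_eq]
    ring
  have hU : ∀ z, HasDerivAt (fun z => (Φ z - z * deriv Φ z) * s z) 0 z := by
    intro z
    have := (hu z).mul (hs_deriv z)
    refine this.congr_deriv (Eq.symm ?_)
    have hodez := hode z
    have hsq := hs_sq z
    field_simp [hs_ne z]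
    linear_combination (z * deriv (deriv Φ) z) * hsq + z * hodez
  have hUconst : ∀ z, (Φ z - z * deriv Φ z) * s z = Φ 0 := by
    intro z
    have := is_const_of_deriv_eq_zero (f := fun z => (Φ z - z * deriv Φ z) * s z)
      (fun z => (hU z).differentiableAt) (fun z => (hU z).deriv) z 0
    simpa [hs_def] using this
  set f := Φ 0 with hf_def
  have hf_pos : 0 < f := hΦpos 0
  have hu_eq : ∀ z, Φ z - z * deriv Φ z = f / s z := by
    intro z
    rw [eq_div_iff (hs_ne z)]
    exact hUconst z
  have hΦ''_eq : ∀ z, deriv (deriv Φ) z = g * f / s z ^ 3 := by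
    intro z
    have hodez := hode z
    rw [hu_eq z] at hodez
    have h2' : (g * z ^ 2 + 1) * deriv (deriv Φ) z * s z = g * f := by
      rw [hodez]; field_simp [hs_ne z]
    rw [eq_div_iff (by positivity)]
    linear_combination (deriv (deriv Φ) z * s z) * hs_sq z + h2'
  -- G := Φ - f*s has derivative dG, and dG is constant
  set dG : ℝ → ℝ := fun z => deriv Φ z - f * (g * z / s z) with hdG_def
  have hdG0 : ∀ z, HasDerivAt dG 0 z := by
    intro z
    have := (hΦ'' z).sub ((hs'_deriv z).const_mul f)
    refine this.congr_deriv (Eq.symm ?_)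
    rw [hΦ''_eq z]
    ring
  have hdGconst : ∀ z, dG z = dG 0 := fun z =>
    is_const_of_deriv_eq_zero (fun z => (hdG0 z).differentiableAt)
      (fun z => (hdG0 z).deriv) z 0
  set b := dG 0 with hb_def
  have hK : ∀ z, HasDerivAt (fun z => Φ z - f * s z - b * z) 0 z := by
    intro z
    have := ((hΦ' z).sub ((hs_deriv z).const_mul f)).sub
      ((hasDerivAt_id z).const_mul b)
    refine this.congr_deriv (Eq.symm ?_)
    have := hdGconst z
    simp only [hdG_def] at this
    linarith [this]
  have hKconst : ∀ z, Φ z - f * s z - b * z = Φ 0 - f * s 0 - b * 0 := fun z =>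
    is_const_of_deriv_eq_zero (fun z => (hK z).differentiableAt)
      (fun z => (hK z).deriv) z 0
  refine ⟨f, hf_pos, b, fun z => ?_⟩
  have h0 : s 0 = 1 := by simp [hs_def]
  have := hKconst z
  rw [h0] at this
  have : Φ z = f * s z + b * z := by linarith [this]
  simpa [hs_def] using this
end

section
/- Let Φ : I × ℝ → ℝ (written Φ(r,z)) be differentiable and satisfy the first-order PDE ∂Φ/∂r + z·h₂(r)·∂Φ/∂z = h₂(r)·Φ, where h₂ : I → ℝ is continuous. Then there exists a differentiable function G : ℝ → ℝ such that Φ(r,z) = h(r)⁻¹ · G(h(r)·z), where h(r) = exp(−∫ h₂(r) dr). -/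
theorem stmt9 (Φ : ℝ → ℝ → ℝ) (h₂ H : ℝ → ℝ)
    (hΦ : Differentiable ℝ (fun p : ℝ × ℝ => Φ p.1 p.2))
    (hh₂ : Continuous h₂) (hH : ∀ r : ℝ, HasDerivAt H (h₂ r) r)
    (hpde : ∀ r z : ℝ,
      deriv (fun t => Φ t z) r + z * h₂ r * deriv (fun t => Φ r t) z
        = h₂ r * Φ r z) :
    ∃ G : ℝ → ℝ, Differentiable ℝ G ∧ ∀ r z : ℝ,
      Φ r z = (Real.exp (-(H r)))⁻¹ * G (Real.exp (-(H r)) * z) := by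
  set f : ℝ × ℝ → ℝ := fun p => Φ p.1 p.2 with hf
  -- partial derivatives in terms of the Fréchet derivative
  have hpart1 : ∀ r z : ℝ,
      deriv (fun t => Φ t z) r = fderiv ℝ f (r, z) (1, 0) := by
    intro r z
    have h := (hΦ (r, z)).hasFDerivAt.comp_hasDerivAt r
      ((hasDerivAt_id r).prodMk (hasDerivAt_const r z))
    exact h.deriv
  have hpart2 : ∀ r z : ℝ,
      deriv (fun t => Φ r t) z = fderiv ℝ f (r, z) (0, 1) := by
    intro r z
    have h := (hΦ (r, z)).hasFDerivAt.comp_hasDerivAt z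
      ((hasDerivAt_const z r).prodMk (hasDerivAt_id z))
    exact h.deriv
  -- F u r := exp(-H r) * Φ r (u * exp (H r)) is constant in r
  set F : ℝ → ℝ → ℝ := fun u r => Real.exp (-(H r)) * Φ r (u * Real.exp (H r))
    with hF
  have hFderiv : ∀ u r : ℝ, HasDerivAt (F u) 0 r := by
    intro u r
    set z : ℝ := u * Real.exp (H r) with hz
    have e1 : HasDerivAt (fun t => Real.exp (-(H t)))
        (Real.exp (-(H r)) * -(h₂ r)) r := (hH r).neg.exp
    have e2 : HasDerivAt (fun t => u * Real.exp (H t))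
        (u * (Real.exp (H r) * h₂ r)) r := ((hH r).exp).const_mul u
    have curve : HasDerivAt (fun t => ((t, u * Real.exp (H t)) : ℝ × ℝ))
        (1, u * (Real.exp (H r) * h₂ r)) r := (hasDerivAt_id r).prodMk e2
    have comp : HasDerivAt (fun t => Φ t (u * Real.exp (H t)))
        (fderiv ℝ f (r, z) (1, u * (Real.exp (H r) * h₂ r))) r :=
      by have := (hΦ (r, z)).hasFDerivAt.comp_hasDerivAt r curve; exact this
    have hL : fderiv ℝ f (r, z) (1, u * (Real.exp (H r) * h₂ r))
        = deriv (fun t => Φ t z) r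
          + (z * h₂ r) * deriv (fun t => Φ r t) z := by
      rw [hpart1, hpart2]
      have : ((1 : ℝ), u * (Real.exp (H r) * h₂ r))
          = (1, 0) + (z * h₂ r) • ((0 : ℝ), (1 : ℝ)) := by
        simp [hz]; ring
      rw [this, map_add, map_smul]
      simp [smul_eq_mul]
    have hmul := e1.fun_mul comp
    have key : Real.exp (-(H r)) * -(h₂ r) * Φ r z
        + Real.exp (-(H r))
          * fderiv ℝ f (r, z) (1, u * (Real.exp (H r) * h₂ r)) = 0 := by
      rw [hL]
      have := hpde r z
      nlinarith [this, Real.exp_pos (-(H r))]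
    have : F u = fun t => Real.exp (-(H t)) * Φ t (u * Real.exp (H t)) := rfl
    rw [this]
    simpa [key] using hmul.congr_deriv key
  have hFconst : ∀ u r : ℝ, F u r = F u 0 := by
    intro u r
    have hdiff : Differentiable ℝ (F u) := fun x => (hFderiv u x).differentiableAt
    have hd0 : ∀ x, deriv (F u) x = 0 := fun x => (hFderiv u x).deriv
    exact is_const_of_deriv_eq_zero hdiff hd0 r 0
  refine ⟨fun u => Real.exp (-(H 0)) * Φ 0 (Real.exp (H 0) * u), ?_, ?_⟩
  · have : Differentiable ℝ (fun u : ℝ => Φ 0 (Real.exp (H 0) * u)) := by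
      have := hΦ.comp ((differentiable_const (0:ℝ)).prodMk
        ((differentiable_id.const_mul (Real.exp (H 0)))))
      exact this
    exact this.const_mul _
  · intro r z
    have h0 := hFconst (Real.exp (-(H r)) * z) r
    have hz : Real.exp (-(H r)) * z * Real.exp (H r) = z := by
      rw [mul_comm (Real.exp (-(H r)) * z), ← mul_assoc, ← Real.exp_add]
      simp
    simp only [hF, hz] at h0
    have hne : Real.exp (-(H r)) ≠ 0 := Real.exp_ne_zero _
    field_simp
    rw [show Real.exp (-(H r)) * Real.exp (H 0) * z
        = Real.exp (-(H r)) * z * Real.exp (H 0) by ring, ← h0]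
    ring
end

section
/- Let n ≥ 3 and let h : (0,ρ) → ℝ be a positive twice differentiable function satisfying both (1−n)·r·(h')² + r·h·h'' + (2n−3)·h·h' = 0 and r·h'' − h' = 0 on (0,ρ). Then there exist constants k₁, k₂ with k₁·k₂ = 0 such that h(r) = k₁·r² + k₂ for all r ∈ (0,ρ). -/
lemma const_on_aux (f : ℝ → ℝ) (s : Set ℝ) (hs : Convex ℝ s)
    (hf : ∀ x ∈ s, HasDerivAt f 0 x) {x y : ℝ} (hx : x ∈ s) (hy : y ∈ s) :
    f x = f y := by
  have := hs.norm_image_sub_le_of_norm_hasDerivWithin_le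
    (f' := fun _ => (0 : ℝ)) (C := 0)
    (fun z hz => (hf z hz).hasDerivWithinAt) (fun z hz => by simp) hx hy
  have h0 : ‖f y - f x‖ ≤ 0 := by simpa using this
  have h1 : f y - f x = 0 := norm_eq_zero.mp (le_antisymm h0 (norm_nonneg _))
  linarith

theorem stmt18 (n : ℕ) (hn : 3 ≤ n) (ρ : ℝ) (hρ : 0 < ρ) (h h' h'' : ℝ → ℝ)
    (hpos : ∀ r ∈ Set.Ioo (0 : ℝ) ρ, 0 < h r)
    (hd1 : ∀ r ∈ Set.Ioo (0 : ℝ) ρ, HasDerivAt h (h' r) r)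
    (hd2 : ∀ r ∈ Set.Ioo (0 : ℝ) ρ, HasDerivAt h' (h'' r) r)
    (heq1 : ∀ r ∈ Set.Ioo (0 : ℝ) ρ,
      (1 - (n : ℝ)) * r * (h' r) ^ 2 + r * h r * h'' r
        + (2 * (n : ℝ) - 3) * h r * h' r = 0)
    (heq2 : ∀ r ∈ Set.Ioo (0 : ℝ) ρ, r * h'' r - h' r = 0) :
    ∃ k₁ k₂ : ℝ, k₁ * k₂ = 0 ∧
      ∀ r ∈ Set.Ioo (0 : ℝ) ρ, h r = k₁ * r ^ 2 + k₂ := by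
  have hconv : Convex ℝ (Set.Ioo (0 : ℝ) ρ) := convex_Ioo _ _
  set r₀ := ρ / 2 with hr₀def
  have hr₀ : r₀ ∈ Set.Ioo (0 : ℝ) ρ := ⟨by linarith, by linarith⟩
  set k₁ : ℝ := h' r₀ / (2 * r₀) with hk₁
  set k₂ : ℝ := h r₀ - k₁ * r₀ ^ 2 with hk₂
  -- step 1: h' r = 2 k₁ r on Ioo, via constancy of h' r / r
  have hg : ∀ r ∈ Set.Ioo (0 : ℝ) ρ, HasDerivAt (fun r => h' r / r) 0 r := by
    intro r hr
    have hrne : r ≠ 0 := ne_of_gt hr.1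
    have := (hd2 r hr).div (hasDerivAt_id r) hrne
    refine this.congr_deriv ?_
    have h2 := heq2 r hr
    simp only [id]
    rw [div_eq_iff (pow_ne_zero 2 hrne)]
    linear_combination h2
  have hlin : ∀ r ∈ Set.Ioo (0 : ℝ) ρ, h' r = 2 * k₁ * r := by
    intro r hr
    have := const_on_aux _ _ hconv hg hr hr₀
    have hrne : r ≠ 0 := ne_of_gt hr.1
    have hr₀ne : r₀ ≠ 0 := ne_of_gt hr₀.1
    rw [hk₁]
    field_simp at this ⊢
    linarith [this]
  -- step 2: h r = k₁ r^2 + k₂ on Ioo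
  have hF : ∀ r ∈ Set.Ioo (0 : ℝ) ρ, HasDerivAt (fun r => h r - k₁ * r ^ 2) 0 r := by
    intro r hr
    have := (hd1 r hr).sub (((hasDerivAt_pow 2 r)).const_mul k₁)
    refine this.congr_deriv ?_
    rw [hlin r hr]
    ring
  have hval : ∀ r ∈ Set.Ioo (0 : ℝ) ρ, h r = k₁ * r ^ 2 + k₂ := by
    intro r hr
    have := const_on_aux _ _ hconv hF hr hr₀
    rw [hk₂]; linarith [this]
  refine ⟨k₁, k₂, ?_, hval⟩
  -- step 3: plug into heq1 at r₀
  have e1 := heq1 r₀ hr₀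
  have e2 := heq2 r₀ hr₀
  have hh := hval r₀ hr₀
  have hh' := hlin r₀ hr₀
  have hr₀pos : (0:ℝ) < r₀ := hr₀.1
  have hh'' : h'' r₀ = 2 * k₁ := by
    have : r₀ * h'' r₀ = 2 * k₁ * r₀ := by rw [← hh']; linarith
    field_simp at this; nlinarith [this]
  rw [hh, hh', hh''] at e1
  have hn3 : (3:ℝ) ≤ (n:ℝ) := by exact_mod_cast hn
  have key : (k₁ * k₂) * (4 * ((n:ℝ) - 1) * r₀) = 0 := by linear_combination e1
  rcases mul_eq_zero.mp key with hz | hz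
  · exact hz
  · exact absurd hz (ne_of_gt (by nlinarith))
end

section
/- Let h : (0,ρ) → ℝ be positive and twice differentiable and satisfy (1−2)·r·(h')² + r·h·h'' + (2·2−3)·h·h' = 0, i.e. −r(h')² + r h h'' + h h' = 0 (the n = 2 case). Then there exist constants k > 0 and C such that h(r) = k·r^C for all r ∈ (0,ρ). -/
/-- On a convex open set, a function with derivative zero is constant. -/
lemma const_of_hasDerivAt_zero {s : Set ℝ} (hs : Convex ℝ s) (ho : IsOpen s)
    {f : ℝ → ℝ} (hf : ∀ x ∈ s, HasDerivAt f 0 x) {x y : ℝ}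
    (hx : x ∈ s) (hy : y ∈ s) : f x = f y := by
  apply hs.is_const_of_fderivWithin_eq_zero (f := f)
    (fun z hz => ((hf z hz).differentiableAt).differentiableWithinAt) _ hx hy
  intro z hz
  rw [fderivWithin_of_isOpen ho hz, (hf z hz).hasFDerivAt.fderiv]
  ext
  simp

theorem stmt19 (ρ : ℝ) (hρ : 0 < ρ) (h h' h'' : ℝ → ℝ)
    (hpos : ∀ r ∈ Set.Ioo (0 : ℝ) ρ, 0 < h r)
    (hd1 : ∀ r ∈ Set.Ioo (0 : ℝ) ρ, HasDerivAt h (h' r) r)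
    (hd2 : ∀ r ∈ Set.Ioo (0 : ℝ) ρ, HasDerivAt h' (h'' r) r)
    (heq : ∀ r ∈ Set.Ioo (0 : ℝ) ρ,
      -(r * (h' r) ^ 2) + r * h r * h'' r + h r * h' r = 0) :
    ∃ k C : ℝ, 0 < k ∧ ∀ r ∈ Set.Ioo (0 : ℝ) ρ, h r = k * r ^ C := by
  set s : Set ℝ := Set.Ioo (0 : ℝ) ρ with hsdef
  have hr₀ : (ρ/2) ∈ s := ⟨by linarith, by linarith⟩
  set C : ℝ := (ρ/2) * h' (ρ/2) / h (ρ/2) with hC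
  -- g = r h'/h is constant = C
  have hg : ∀ r ∈ s, HasDerivAt (fun r => r * h' r / h r) 0 r := by
    intro r hr
    have h1 : HasDerivAt (fun r => r * h' r) (1 * h' r + r * h'' r) r :=
      (hasDerivAt_id r).mul (hd2 r hr)
    have h2 := h1.div (hd1 r hr) (hpos r hr).ne'
    refine h2.congr_deriv ?_
    symm
    have := heq r hr
    have hne := (hpos r hr).ne'
    field_simp
    ring_nf
    ring_nf at this
    linarith
  have hgc : ∀ r ∈ s, r * h' r / h r = C := fun r hr =>
    const_of_hasDerivAt_zero (convex_Ioo 0 ρ) isOpen_Ioo hg hr hr₀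
  -- h' r = C * h r / r on s
  have hkey : ∀ r ∈ s, h' r * r = C * h r := by
    intro r hr
    have := hgc r hr
    have hne := (hpos r hr).ne'
    field_simp at this
    linarith
  -- F = h r * r^(-C) constant
  have hF : ∀ r ∈ s, HasDerivAt (fun r => h r * r ^ (-C)) 0 r := by
    intro r hr
    have hrpos : (0:ℝ) < r := hr.1
    have hp : HasDerivAt (fun x : ℝ => x ^ (-C)) (-C * r ^ (-C - 1)) r :=
      Real.hasDerivAt_rpow_const (Or.inl hrpos.ne')
    have h2 := (hd1 r hr).mul hp
    refine h2.congr_deriv ?_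
    symm
    have hk := hkey r hr
    have : r ^ (-C - 1) = r ^ (-C) / r := by
      rw [Real.rpow_sub hrpos, Real.rpow_one]
    rw [this]
    field_simp
    nlinarith [Real.rpow_pos_of_pos hrpos (-C)]
  set k : ℝ := h (ρ/2) * (ρ/2) ^ (-C) with hk
  refine ⟨k, C, ?_, ?_⟩
  · exact mul_pos (hpos _ hr₀) (Real.rpow_pos_of_pos (by linarith : (0:ℝ) < ρ/2) _)
  · intro r hr
    have hFc : h r * r ^ (-C) = k :=
      const_of_hasDerivAt_zero (convex_Ioo 0 ρ) isOpen_Ioo hF hr hr₀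
    have hrpos : (0:ℝ) < r := hr.1
    have hpow : r ^ (-C) * r ^ C = 1 := by
      rw [← Real.rpow_add hrpos]; simp
    calc h r = h r * r ^ (-C) * r ^ C := by
          rw [mul_assoc, hpow, mul_one]
      _ = k * r ^ C := by rw [hFc]
end
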